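/- arXiv:2009.08634 — 4 statements merged into one kernel-verified Lean document; each statement's English description precedes it below -/
import Mathlib

section
/- Let G : {0,1}^n → ℝ, let p_1,...,p_n ∈ (0,1] define a product (fully-factorized) distribution Pr on {0,1}^n, and for z > 0 define the product distribution Pr_z with Pr_z(X_j = 1) = (p_j + z)/(1 + z). Then Σ_{k=0}^{n} z^k · v_k = (1+z)^n · E_{Pr_z}[G], where v_k = Σ_{S ⊆ [n], |S|=k} E_{Pr}[G | X_S = 1]. -/
/-!
Dividing by `Pr(X_S = 1) = ∏_{i ∈ S} p i` turns `z ^ |S| · E_Pr[G | X_S = 1]` into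
`∑_x G x · Pr(x) · ∏_{i ∈ S} [x i] z / p i`. Summing over all `S` and exchanging the sums,
the inner sum over `S` factorises as `∏_i (1 + [x i] z / p i)`, and coordinatewise
`p i (1 + z / p i) = p i + z` and `1 - p i = (1 + z) - (p i + z)`, so the product with `Pr(x)`
is `(1 + z) ^ n · Pr_z(x)`.
-/

open Finset

/-- Product (fully-factorized) distribution on `{0,1}^n` with `Pr(X_i = 1) = p i`. -/
noncomputable def prodPr {n : ℕ} (p : Fin n → ℝ) (x : Fin n → Bool) : ℝ :=
  ∏ i : Fin n, if x i then p i else 1 - p i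

/-- `E_Pr[G | X_S = 1]`, using `Pr(X_S = 1) = ∏_{i ∈ S} p i`. -/
noncomputable def condExpProd {n : ℕ} (G : (Fin n → Bool) → ℝ) (p : Fin n → ℝ)
    (S : Finset (Fin n)) : ℝ :=
  (∑ x : Fin n → Bool, if ∀ i ∈ S, x i = true then G x * prodPr p x else 0) /
    ∏ i ∈ S, p i

lemma sum_range_pow_mul_sum_powersetCard {α R : Type*} [CommSemiring R] (s : Finset α) (z : R)
    (f : Finset α → R) :
    ∑ k ∈ range (#s + 1), z ^ k * ∑ t ∈ s.powersetCard k, f t =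
      ∑ t ∈ s.powerset, z ^ #t * f t := by
  rw [sum_powerset]
  refine sum_congr rfl fun k _ => ?_
  rw [mul_sum]
  exact sum_congr rfl fun t ht => by rw [(mem_powersetCard.mp ht).2]

variable {n : ℕ}

lemma pow_card_mul_condExpProd (G : (Fin n → Bool) → ℝ) (p : Fin n → ℝ) (z : ℝ)
    (S : Finset (Fin n)) :
    z ^ #S * condExpProd G p S =
      ∑ x, G x * prodPr p x * ∏ i ∈ S, if x i then z / p i else 0 := by
  have hscale : z ^ #S / ∏ i ∈ S, p i = ∏ i ∈ S, z / p i := by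
    rw [prod_div_distrib, prod_const]
  rw [condExpProd, mul_div_left_comm, hscale, sum_mul]
  refine sum_congr rfl fun x _ => ?_
  rw [prod_ite_zero]
  split_ifs <;> ring

lemma prodPr_mul_prod_one_add (p : Fin n → ℝ) (hp : ∀ i, p i ≠ 0) {z : ℝ}
    (hz : 1 + z ≠ 0) (x : Fin n → Bool) :
    prodPr p x * ∏ i, (1 + if x i then z / p i else 0) =
      (1 + z) ^ n * prodPr (fun j => (p j + z) / (1 + z)) x := by
  rw [prodPr, prodPr, ← prod_mul_distrib, ← Fin.prod_const, ← prod_mul_distrib]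
  refine prod_congr rfl fun i _ => ?_
  have hpi := hp i
  cases x i
  · simp only [Bool.false_eq_true, if_false, add_zero, mul_one]
    field_simp
    ring
  · simp only [if_true]
    field_simp

theorem stmt4 {n : ℕ} (G : (Fin n → Bool) → ℝ) (p : Fin n → ℝ)
    (hp : ∀ i, 0 < p i ∧ p i ≤ 1) (z : ℝ) (hz : 0 < z) :
    ∑ k ∈ Finset.range (n + 1),
        z ^ k * ∑ S ∈ Finset.univ.powersetCard k, condExpProd G p S =
      (1 + z) ^ n *
        ∑ x : Fin n → Bool, G x * prodPr (fun j => (p j + z) / (1 + z)) x := by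
  have hp0 : ∀ i, p i ≠ 0 := fun i => (hp i).1.ne'
  have hz1 : 1 + z ≠ 0 := by positivity
  calc ∑ k ∈ range (n + 1), z ^ k * ∑ S ∈ univ.powersetCard k, condExpProd G p S
      = ∑ S ∈ univ.powerset, z ^ #S * condExpProd G p S := by
        rw [← sum_range_pow_mul_sum_powersetCard, card_univ, Fintype.card_fin]
    _ = ∑ x, G x * prodPr p x * ∏ i, (1 + if x i then z / p i else 0) := by
        simp_rw [pow_card_mul_condExpProd G p, prod_one_add]
        rw [sum_comm]
        simp_rw [mul_sum]
    _ = _ := by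
        simp_rw [mul_assoc, prodPr_mul_prod_one_add p hp0 hz1, mul_sum]
        exact sum_congr rfl fun x _ => by ring
end

section
/- Let F : X → ℝ where X = Π_i dom(X_i) with finite domains, and Pr ∈ IND_n a product distribution on X. Define the projection F_π : {0,1}^n → ℝ by F_π(x) = E[F | T(x)] and Pr_π(x) = Pr(T(x)), where T(x) is the event that X_j = 1 iff x_j = 1. Then for every subset S ⊆ [n], E_{Pr}[F | X_S = 1] = E_{Pr_π}[F_π | X_S = 1], assuming these conditioning events have positive probability. -/
open Finset

/-- Product distribution on `Π i, Fin (m i + 2)` with marginals `p i`. -/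
noncomputable def prodPrM {n : ℕ} {m : Fin n → ℕ} (p : (i : Fin n) → Fin (m i + 2) → ℝ)
    (ω : (i : Fin n) → Fin (m i + 2)) : ℝ :=
  ∏ i : Fin n, p i (ω i)

/-- The event `T(x)`: `X_j = 1` (encoded as `0`) iff `x j = true`. -/
def Tev {n : ℕ} {m : Fin n → ℕ} (x : Fin n → Bool) (ω : (i : Fin n) → Fin (m i + 2)) : Prop :=
  ∀ j : Fin n, (ω j = 0 ↔ x j = true)

instance {n : ℕ} {m : Fin n → ℕ} (x : Fin n → Bool) (ω : (i : Fin n) → Fin (m i + 2)) :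
    Decidable (Tev x ω) := by unfold Tev; infer_instance

/-- Projected distribution `Pr_π(x) = Pr(T(x))`. -/
noncomputable def projPr {n : ℕ} {m : Fin n → ℕ} (p : (i : Fin n) → Fin (m i + 2) → ℝ)
    (x : Fin n → Bool) : ℝ :=
  ∑ ω : (i : Fin n) → Fin (m i + 2), if Tev x ω then prodPrM p ω else 0

/-- Projected function `F_π(x) = E[F | T(x)]`. -/
noncomputable def projF {n : ℕ} {m : Fin n → ℕ} (F : ((i : Fin n) → Fin (m i + 2)) → ℝ)
    (p : (i : Fin n) → Fin (m i + 2) → ℝ) (x : Fin n → Bool) : ℝ :=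
  (∑ ω : (i : Fin n) → Fin (m i + 2), if Tev x ω then F ω * prodPrM p ω else 0) /
    projPr p x

lemma Tev_iff {n : ℕ} {m : Fin n → ℕ} (x : Fin n → Bool) (ω : (i : Fin n) → Fin (m i + 2)) :
    Tev x ω ↔ x = fun j => decide (ω j = 0) := by
  constructor
  · intro h; funext j
    by_cases hx : x j = true
    · simp [hx, (h j).2 hx]
    · have : ¬ ω j = 0 := fun h0 => hx ((h j).1 h0)
      simp [this, Bool.not_eq_true] at hx ⊢; exact hx
  · rintro rfl j; simp

lemma key_sum {n : ℕ} {m : Fin n → ℕ} (S : Finset (Fin n))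
    (g : ((i : Fin n) → Fin (m i + 2)) → ℝ) :
    (∑ x : Fin n → Bool, if ∀ i ∈ S, x i = true then
        (∑ ω : (i : Fin n) → Fin (m i + 2), if Tev x ω then g ω else 0) else 0)
      = ∑ ω : (i : Fin n) → Fin (m i + 2), if ∀ i ∈ S, ω i = 0 then g ω else 0 := by
  have : ∀ x : Fin n → Bool,
      (if ∀ i ∈ S, x i = true then
        (∑ ω : (i : Fin n) → Fin (m i + 2), if Tev x ω then g ω else 0) else 0)
      = ∑ ω : (i : Fin n) → Fin (m i + 2),
          if (∀ i ∈ S, x i = true) ∧ Tev x ω then g ω else 0 := by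
    intro x
    by_cases h : ∀ i ∈ S, x i = true
    · rw [if_pos h]
      exact Finset.sum_congr rfl fun ω _ => by rw [if_congr (and_iff_right h).symm rfl rfl]
    · rw [if_neg h]
      exact (Finset.sum_eq_zero fun ω _ => if_neg fun hc => h hc.1).symm
  rw [Finset.sum_congr rfl (fun x _ => this x), Finset.sum_comm]
  refine Finset.sum_congr rfl fun ω _ => ?_
  have hx : ∀ x : Fin n → Bool,
      ((∀ i ∈ S, x i = true) ∧ Tev x ω) ↔
      (x = (fun j => decide (ω j = 0)) ∧ ∀ i ∈ S, ω i = 0) := by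
    intro x
    rw [Tev_iff]
    constructor
    · rintro ⟨h1, rfl⟩; exact ⟨rfl, fun i hi => by simpa using h1 i hi⟩
    · rintro ⟨rfl, h2⟩; exact ⟨fun i hi => by simp [h2 i hi], rfl⟩
  calc (∑ x : Fin n → Bool, if (∀ i ∈ S, x i = true) ∧ Tev x ω then g ω else 0)
      = ∑ x : Fin n → Bool,
          if x = (fun j => decide (ω j = 0)) then (if ∀ i ∈ S, ω i = 0 then g ω else 0) else 0 := by
        refine Finset.sum_congr rfl fun x _ => ?_
        rw [if_congr (hx x) rfl rfl]
        by_cases h1 : x = (fun j => decide (ω j = 0)) <;>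
          by_cases h2 : ∀ i ∈ S, ω i = 0 <;> simp [h1, h2]
    _ = if ∀ i ∈ S, ω i = 0 then g ω else 0 := by
        rw [Finset.sum_ite_eq' Finset.univ, if_pos (Finset.mem_univ _)]

lemma projPr_pos {n : ℕ} {m : Fin n → ℕ} (p : (i : Fin n) → Fin (m i + 2) → ℝ)
    (hpos : ∀ i j, 0 < p i j) (x : Fin n → Bool) : 0 < projPr p x := by
  unfold projPr
  have hmem : Tev (m := m) x (fun j => if x j then (0 : Fin (m j + 2)) else 1) := by
    intro j; by_cases h : x j = true <;> simp [h, Fin.ext_iff]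
  refine Finset.sum_pos' (fun ω _ => ?_) ⟨fun j => if x j then (0 : Fin (m j + 2)) else 1, Finset.mem_univ _, ?_⟩
  · by_cases h : Tev x ω
    · simp only [h, if_true]; exact le_of_lt (Finset.prod_pos fun i _ => hpos i _)
    · simp [h]
  · simp only [hmem, if_true]; exact Finset.prod_pos fun i _ => hpos i _

theorem stmt8 {n : ℕ} {m : Fin n → ℕ} (F : ((i : Fin n) → Fin (m i + 2)) → ℝ)
    (p : (i : Fin n) → Fin (m i + 2) → ℝ)
    (hpos : ∀ i j, 0 < p i j) (hsum : ∀ i, ∑ j : Fin (m i + 2), p i j = 1)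
    (S : Finset (Fin n)) :
    (∑ ω : (i : Fin n) → Fin (m i + 2), if ∀ i ∈ S, ω i = 0 then F ω * prodPrM p ω else 0) /
        (∑ ω : (i : Fin n) → Fin (m i + 2), if ∀ i ∈ S, ω i = 0 then prodPrM p ω else 0) =
      (∑ x : Fin n → Bool, if ∀ i ∈ S, x i = true then projF F p x * projPr p x else 0) /
        (∑ x : Fin n → Bool, if ∀ i ∈ S, x i = true then projPr p x else 0) := by
  have hnum : (∑ x : Fin n → Bool, if ∀ i ∈ S, x i = true then projF F p x * projPr p x else 0)
      = ∑ ω : (i : Fin n) → Fin (m i + 2), if ∀ i ∈ S, ω i = 0 then F ω * prodPrM p ω else 0 := by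
    rw [← key_sum S (fun ω => F ω * prodPrM p ω)]
    refine Finset.sum_congr rfl fun x _ => ?_
    by_cases h : ∀ i ∈ S, x i = true
    · rw [if_pos h, if_pos h]
      unfold projF
      exact div_mul_cancel₀ _ (ne_of_gt (projPr_pos p hpos x))
    · rw [if_neg h, if_neg h]
  have hden : (∑ x : Fin n → Bool, if ∀ i ∈ S, x i = true then projPr p x else 0)
      = ∑ ω : (i : Fin n) → Fin (m i + 2), if ∀ i ∈ S, ω i = 0 then prodPrM p ω else 0 := by
    rw [← key_sum S (fun ω => prodPrM p ω)]
    rfl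
  rw [hnum, hden]
end

section
/- Let k_1,...,k_n be natural numbers with Σ_i k_i = 2c, let P = {S ⊆ [n] : Σ_{i∈S} k_i = c}, and let ε = 1/2^{n+3}. For weights w_0 = −m/2 − mc and w_i = m·k_i, define F(x) = σ(w_0 + Σ_i w_i x_i) with σ(t) = 1/(1+e^{−t}). If m satisfies 2σ(−m/2) ≤ ε and 1−σ(m/2) ≤ ε, then |P| = ⌈2^n − 2^{n+1}·E_U[F]/(1−ε)⌉, where E_U is expectation under the uniform distribution on {0,1}^n. -/
/-! Pair each subset `S` with its complement. Since `∑ i ∈ Sᶜ, k i = 2c - ∑ i ∈ S, k i`,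
`F S + F Sᶜ = σ(m d - m/2) + σ(-m d - m/2)` with `d = ∑ i ∈ S, k i - c`. For a balanced `S`
(`d = 0`) this is `2 σ(-m/2) ≤ ε`, while for an integer `d ≠ 0` it lies within `σ(-m/2)` of `1`.
Summing over all pairs, `2^(n+1) E_U[F]` lies between `q (1 - ε)` and `q + 2^n ε`, where `q` is the
number of unbalanced subsets, and `ε` is small enough that dividing by `1 - ε` and taking the
ceiling recovers `|P| = 2^n - q` exactly. -/

open Finset

/-- The logistic function. -/
noncomputable def sigmoid (t : ℝ) : ℝ := 1 / (1 + Real.exp (-t))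

lemma sigmoid_eq_real_sigmoid : sigmoid = Real.sigmoid :=
  funext fun _ => one_div _

lemma nonneg_of_two_mul_sigmoid_neg_half_le_one {m : ℝ} (h : 2 * Real.sigmoid (-(m / 2)) ≤ 1) :
    0 ≤ m := by
  by_contra! hm
  have : Real.sigmoid 0 < Real.sigmoid (-(m / 2)) := Real.sigmoid_lt (by linarith)
  rw [Real.sigmoid_zero] at this
  linarith

lemma abs_sigmoid_pair_sub_one_le {m d : ℝ} (hm : 0 ≤ m) (hd : 1 ≤ |d|) :
    |Real.sigmoid (m * d - m / 2) + Real.sigmoid (-(m * d) - m / 2) - 1|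
      ≤ Real.sigmoid (-(m / 2)) := by
  wlog hd' : 1 ≤ d generalizing d
  · have h := this (d := -d) (by rwa [abs_neg])
      (by linarith [(le_abs'.mp hd).resolve_right hd'])
    rwa [mul_neg, neg_neg, add_comm] at h
  have hhi : Real.sigmoid (m / 2) ≤ Real.sigmoid (m * d - m / 2) :=
    Real.sigmoid_le (by nlinarith)
  have hlo : Real.sigmoid (-(m * d) - m / 2) ≤ Real.sigmoid (-(m / 2)) :=
    Real.sigmoid_le (by nlinarith)
  rw [Real.sigmoid_neg] at hlo ⊢
  rw [abs_le]
  constructor <;>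
    linarith [Real.sigmoid_lt_one (m * d - m / 2), Real.sigmoid_pos (-(m * d) - m / 2)]

lemma bounds_two_mul_sum_of_involutive {β : Type*} [Fintype β] {ι : β → β}
    (hι : Function.Involutive ι) (f : β → ℝ) (P : β → Prop) [DecidablePred P] {ε : ℝ}
    (hP : ∀ x, P x → 0 ≤ f x + f (ι x) ∧ f x + f (ι x) ≤ ε)
    (hnP : ∀ x, ¬P x → |f x + f (ι x) - 1| ≤ ε) :
    #{x | ¬P x} * (1 - ε) ≤ 2 * ∑ x, f x ∧
      2 * ∑ x, f x ≤ #{x | ¬P x} + ε * Fintype.card β := by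
  have hpair : 2 * ∑ x, f x = ∑ x, (f x + f (ι x)) := by
    rw [sum_add_distrib, hι.bijective.sum_comp f]; ring
  have hsplit := sum_filter_add_sum_filter_not univ P (fun x => f x + f (ι x))
  have hcard : (#{x | P x} : ℝ) + #{x | ¬P x} = Fintype.card β := by
    exact_mod_cast card_filter_add_card_filter_not P
  have hPlo : 0 ≤ ∑ x with P x, (f x + f (ι x)) :=
    sum_nonneg fun x hx => (hP x (mem_filter.mp hx).2).1
  have hPhi : ∑ x with P x, (f x + f (ι x)) ≤ #{x | P x} * ε := by
    rw [← nsmul_eq_mul]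
    exact sum_le_card_nsmul _ _ _ fun x hx => (hP x (mem_filter.mp hx).2).2
  have hnPlo : #{x | ¬P x} * (1 - ε) ≤ ∑ x with ¬P x, (f x + f (ι x)) := by
    rw [← nsmul_eq_mul]
    exact card_nsmul_le_sum _ _ _ fun x hx => by
      linarith [(abs_le.mp (hnP x (mem_filter.mp hx).2)).1]
  have hnPhi : ∑ x with ¬P x, (f x + f (ι x)) ≤ #{x | ¬P x} * (1 + ε) := by
    rw [← nsmul_eq_mul]
    exact sum_le_card_nsmul _ _ _ fun x hx => by
      linarith [(abs_le.mp (hnP x (mem_filter.mp hx).2)).2]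
  have hcardε : (#{x | P x} : ℝ) * ε + #{x | ¬P x} * (1 + ε) =
      #{x | ¬P x} + ε * Fintype.card β := by
    rw [← hcard]; ring
  constructor <;> linarith

lemma ceil_sub_div_one_sub_eq {N p q : ℕ} (hpq : p + q = N) {ε T : ℝ}
    (hε : ε * (2 * N + 1) < 1) (hlo : q * (1 - ε) ≤ T) (hhi : T ≤ q + ε * N) :
    ⌈(N : ℝ) - T / (1 - ε)⌉ = p := by
  have hqN : (q : ℝ) ≤ N := by exact_mod_cast hpq ▸ Nat.le_add_left q p
  have hε1 : 0 < 1 - ε := by nlinarith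
  have hq : (q : ℝ) ≤ T / (1 - ε) := (le_div_iff₀ hε1).mpr hlo
  have hq1 : T / (1 - ε) < q + 1 := by
    rw [div_lt_iff₀ hε1]
    rcases le_or_gt ε 0 with h | h <;> nlinarith
  rw [Int.ceil_eq_iff, ← hpq]
  push_cast
  constructor <;> linarith

lemma sum_boolFun_eq_sum_finset {α M : Type*} [Fintype α] [DecidableEq α] [AddCommMonoid M]
    (g : Finset α → M) : ∑ x : α → Bool, g {i | x i} = ∑ S : Finset α, g S :=
  Fintype.sum_bijective (fun x => ({i | x i} : Finset α))
    (Function.bijective_iff_has_inverse.mpr ⟨fun S i => decide (i ∈ S),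
      fun x => by ext; simp, fun S => by ext; simp⟩) _ _ fun _ => rfl

section SubsetSum

variable {α : Type*} [Fintype α] [DecidableEq α] (k : α → ℕ) (c : ℕ) (m : ℝ)

-- The neuron `F` of the statement, evaluated at the indicator vector of `S`.
noncomputable def subsetSumNeuron (S : Finset α) : ℝ :=
  Real.sigmoid (-(m / 2) - m * c + m * ∑ i ∈ S, (k i : ℝ))

variable {k c}

lemma subsetSumNeuron_add_compl (hsum : ∑ i, k i = 2 * c) (S : Finset α) :
    subsetSumNeuron k c m S + subsetSumNeuron k c m Sᶜ =
      Real.sigmoid (m * ((∑ i ∈ S, k i : ℕ) - c) - m / 2) +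
        Real.sigmoid (-(m * ((∑ i ∈ S, k i : ℕ) - c)) - m / 2) := by
  have hcompl : (∑ i ∈ Sᶜ, (k i : ℝ)) = 2 * c - ∑ i ∈ S, (k i : ℝ) := by
    rw [eq_sub_iff_add_eq, add_comm, sum_add_sum_compl]
    exact_mod_cast hsum
  unfold subsetSumNeuron
  rw [hcompl]
  push_cast
  ring_nf

lemma subsetSumNeuron_add_compl_of_sum_eq (hsum : ∑ i, k i = 2 * c) {S : Finset α}
    (hS : ∑ i ∈ S, k i = c) :
    subsetSumNeuron k c m S + subsetSumNeuron k c m Sᶜ = 2 * Real.sigmoid (-(m / 2)) := by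
  rw [subsetSumNeuron_add_compl m hsum, hS]
  ring_nf

lemma abs_subsetSumNeuron_add_compl_sub_one_le (hsum : ∑ i, k i = 2 * c) (hm : 0 ≤ m)
    {S : Finset α} (hS : ∑ i ∈ S, k i ≠ c) :
    |subsetSumNeuron k c m S + subsetSumNeuron k c m Sᶜ - 1| ≤ Real.sigmoid (-(m / 2)) := by
  rw [subsetSumNeuron_add_compl m hsum]
  refine abs_sigmoid_pair_sub_one_le hm ?_
  rcases hS.lt_or_gt with h | h
  · rw [abs_sub_comm, le_abs]
    left
    have : ((∑ i ∈ S, k i : ℕ) : ℝ) + 1 ≤ c := by exact_mod_cast h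
    linarith
  · rw [le_abs]
    left
    have : (c : ℝ) + 1 ≤ (∑ i ∈ S, k i : ℕ) := by exact_mod_cast h
    linarith

end SubsetSum

theorem stmt9_general {n : ℕ} (k : Fin n → ℕ) (c : ℕ) (hsum : ∑ i : Fin n, k i = 2 * c)
    (m : ℝ)
    (hm1 : 2 * sigmoid (-(m / 2)) ≤ (1 : ℝ) / 2 ^ (n + 3)) :
    ((Finset.univ.powerset.filter
        (fun S : Finset (Fin n) => ∑ i ∈ S, k i = c)).card : ℤ) =
      ⌈(2 ^ n : ℝ) -
        2 ^ (n + 1) *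
          ((1 / 2 ^ n) * ∑ x : Fin n → Bool,
            sigmoid ((-(m / 2) - m * c) +
              ∑ i : Fin n, m * (k i : ℝ) * (if x i then 1 else 0))) /
          (1 - (1 : ℝ) / 2 ^ (n + 3))⌉ := by
  rw [sigmoid_eq_real_sigmoid] at hm1 ⊢
  set ε : ℝ := 1 / 2 ^ (n + 3)
  have hε : ε * (2 * 2 ^ n + 1) < 1 := by
    have : (1 : ℝ) ≤ 2 ^ n := one_le_pow₀ one_le_two
    rw [div_mul_eq_mul_div, div_lt_one (by positivity), pow_add]
    linarith
  have hm : 0 ≤ m := nonneg_of_two_mul_sigmoid_neg_half_le_one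
    (hm1.trans ((div_le_one (by positivity)).mpr (one_le_pow₀ one_le_two)))
  have hF : ∑ x : Fin n → Bool, Real.sigmoid ((-(m / 2) - m * c) +
      ∑ i, m * (k i : ℝ) * (if x i then 1 else 0)) = ∑ S, subsetSumNeuron k c m S := by
    rw [← sum_boolFun_eq_sum_finset]
    simp only [subsetSumNeuron, sum_filter, mul_sum, mul_ite, mul_one, mul_zero]
  obtain ⟨hlo, hhi⟩ := bounds_two_mul_sum_of_involutive compl_involutive (subsetSumNeuron k c m)
    (fun S => ∑ i ∈ S, k i = c) (ε := ε)
    (fun S hS => by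
      rw [subsetSumNeuron_add_compl_of_sum_eq m hsum hS]
      exact ⟨by linarith [Real.sigmoid_pos (-(m / 2))], hm1⟩)
    (fun S hS => (abs_subsetSumNeuron_add_compl_sub_one_le m hsum hm hS).trans
      (by linarith [Real.sigmoid_pos (-(m / 2))]))
  have hcard : #{S : Finset (Fin n) | ∑ i ∈ S, k i = c} + #{S | ¬∑ i ∈ S, k i = c} = 2 ^ n := by
    rw [card_filter_add_card_filter_not, card_univ, Fintype.card_finset, Fintype.card_fin]
  rw [Fintype.card_finset, Fintype.card_fin] at hhi
  rw [powerset_univ, hF, pow_succ, mul_comm _ (2 : ℝ), mul_assoc, ← mul_assoc (2 ^ n : ℝ),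
    mul_one_div_cancel (by positivity), one_mul]
  exact_mod_cast (ceil_sub_div_one_sub_eq hcard (by exact_mod_cast hε) hlo hhi).symm

theorem stmt9 {n : ℕ} (k : Fin n → ℕ) (c : ℕ) (hsum : ∑ i : Fin n, k i = 2 * c)
    (m : ℝ)
    (hm1 : 2 * sigmoid (-(m / 2)) ≤ (1 : ℝ) / 2 ^ (n + 3))
    (hm2 : 1 - sigmoid (m / 2) ≤ (1 : ℝ) / 2 ^ (n + 3)) :
    ((Finset.univ.powerset.filter
        (fun S : Finset (Fin n) => ∑ i ∈ S, k i = c)).card : ℤ) =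
      ⌈(2 ^ n : ℝ) -
        2 ^ (n + 1) *
          ((1 / 2 ^ n) * ∑ x : Fin n → Bool,
            sigmoid ((-(m / 2) - m * c) +
              ∑ i : Fin n, m * (k i : ℝ) * (if x i then 1 else 0))) /
          (1 - (1 : ℝ) / 2 ^ (n + 3))⌉ :=
  stmt9_general k c hsum m hm1
end

section
/- The (n+1)×(n+1) matrix C^{(n,N)} with entries C_{q,k} = 1/C(N, k+q) for q,k ∈ {0,...,n}, where N ≥ 2n, has nonzero determinant. -/
open Nat Polynomial Set intervalIntegral Matrix

/-!
By the Beta integral, `1 / C(N, m) = (N + 1) ∫₀¹ t^m (1 - t)^(N - m) dt`. Since `N ≥ 2n`,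
for `q, k ≤ n` the integrand at `m = q + k` factors as `w(t) f_q(t) f_k(t)` with the weight
`w(t) = (N + 1)(1 - t)^(N - 2n)` and `f_i(t) = t^i (1 - t)^(n - i)`. The matrix is therefore
the Gram matrix of `f_0, …, f_n` in `L²(w dt)` on `[0, 1]`, which is positive definite because
the `f_i` are linearly independent: `Σ x_i f_i(s / (1 + s)) = (Σ x_i s^i) / (1 + s)^n`.
-/

theorem integral_pow_mul_one_sub_pow (a b : ℕ) :
    ∫ t in (0 : ℝ)..1, t ^ a * (1 - t) ^ b = (a ! * b ! : ℝ) / (a + b + 1)! := by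
  have hre (k : ℕ) : 0 < ((k : ℂ) + 1).re := by
    rw [Complex.add_re, Complex.natCast_re, Complex.one_re]
    positivity
  have h := Complex.betaIntegral_eq_Gamma_mul_div (a + 1) (b + 1) (hre a) (hre b)
  rw [show (a + 1 + (b + 1) : ℂ) = ((a + b + 1 : ℕ) : ℂ) + 1 by push_cast; ring,
    Complex.Gamma_nat_eq_factorial, Complex.Gamma_nat_eq_factorial,
    Complex.Gamma_nat_eq_factorial, Complex.betaIntegral] at h
  rw [← Complex.ofReal_inj, ← integral_ofReal]
  push_cast
  simpa [Complex.cpow_natCast] using h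

theorem inv_choose_eq_integral {N m : ℕ} (h : m ≤ N) :
    ((N.choose m : ℝ))⁻¹ = (N + 1) * ∫ t in (0 : ℝ)..1, t ^ m * (1 - t) ^ (N - m) := by
  rw [integral_pow_mul_one_sub_pow, Nat.add_sub_cancel' h, Nat.factorial_succ,
    ← Nat.choose_mul_factorial_mul_factorial h]
  have : (N.choose m : ℝ) ≠ 0 := by exact_mod_cast (Nat.choose_pos h).ne'
  push_cast
  field_simp

theorem Matrix.dotProduct_mulVec_integral_gram {ι : Type*} [Fintype ι] {a b : ℝ}
    {w : ℝ → ℝ} {f : ι → ℝ → ℝ}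
    (hint : ∀ i j, IntervalIntegrable (fun t => w t * f i t * f j t) MeasureTheory.volume a b)
    (x : ι → ℝ) :
    star x ⬝ᵥ (of (fun i j => ∫ t in a..b, w t * f i t * f j t) *ᵥ x)
      = ∫ t in a..b, w t * (∑ i, x i * f i t) ^ 2 := by
  have hint' : ∀ i j, IntervalIntegrable (fun t => x i * (w t * f i t * f j t * x j))
      MeasureTheory.volume a b :=
    fun i j => ((hint i j).mul_const (x j)).const_mul (x i)
  have hsq : ∀ t, w t * (∑ i, x i * f i t) ^ 2
      = ∑ i, ∑ j, x i * (w t * f i t * f j t * x j) := by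
    intro t
    rw [sq, Finset.sum_mul_sum, Finset.mul_sum]
    exact Finset.sum_congr rfl fun i _ => by
      rw [Finset.mul_sum]
      exact Finset.sum_congr rfl fun j _ => by ring
  simp_rw [hsq]
  rw [integral_finsetSum fun i _ => by
    simpa only [Finset.sum_fn] using IntervalIntegrable.sum Finset.univ fun j _ => hint' i j]
  simp_rw [integral_finsetSum fun j _ => hint' _ j, integral_const_mul, integral_mul_const]
  simp only [star_trivial, dotProduct, mulVec, of_apply, Finset.mul_sum]

theorem Matrix.posDef_integral_gram {ι : Type*} [Fintype ι] {a b : ℝ} (hab : a < b)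
    {w : ℝ → ℝ} {f : ι → ℝ → ℝ} (hw : ContinuousOn w (Icc a b))
    (hf : ∀ i, ContinuousOn (f i) (Icc a b))
    (hw_nonneg : ∀ t ∈ Icc a b, 0 ≤ w t) (hw_pos : ∀ t ∈ Ioo a b, 0 < w t)
    (hind : ∀ x : ι → ℝ, x ≠ 0 → ∃ t ∈ Ioo a b, ∑ i, x i * f i t ≠ 0) :
    (of fun i j => ∫ t in a..b, w t * f i t * f j t).PosDef := by
  refine posDef_iff_dotProduct_mulVec.mpr ⟨?_, fun x hx => ?_⟩
  · ext i j
    simp only [conjTranspose_apply, of_apply, star_trivial]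
    congr 1 with t
    ring
  · rw [dotProduct_mulVec_integral_gram fun i j =>
      ((hw.mul (hf i)).mul (hf j)).intervalIntegrable_of_Icc hab.le]
    obtain ⟨t, ht, hne⟩ := hind x hx
    refine integral_pos hab ?_ (fun s hs => ?_) ⟨t, Ioo_subset_Icc_self ht, ?_⟩
    · exact hw.mul ((continuousOn_finsetSum _ fun i _ => (hf i).const_smul (x i)).pow 2)
    · exact mul_nonneg (hw_nonneg s (Ioc_subset_Icc_self hs)) (sq_nonneg _)
    · exact mul_pos (hw_pos t ht) (pow_pos (abs_pos.mpr hne) 2 |>.trans_eq (sq_abs _))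

theorem Polynomial.eval_ofFn {R : Type*} [Semiring R] [DecidableEq R] {n : ℕ} (x : Fin n → R)
    (s : R) :
    (ofFn n x).eval s = ∑ i, x i * s ^ (i : ℕ) := by
  simp [ofFn_eq_sum_monomial, eval_finsetSum, eval_monomial]

theorem sum_mul_pow_mul_one_sub_pow_div_one_add {K : Type*} [Field K] [DecidableEq K] {n : ℕ}
    (x : Fin (n + 1) → K) {s : K} (hs : 1 + s ≠ 0) :
    ∑ i : Fin (n + 1), x i * ((s / (1 + s)) ^ (i : ℕ) * (1 - s / (1 + s)) ^ (n - i))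
      = (ofFn (n + 1) x).eval s / (1 + s) ^ n := by
  rw [eval_ofFn, Finset.sum_div]
  refine Finset.sum_congr rfl fun i _ => ?_
  have hi : (1 + s) ^ n = (1 + s) ^ (i : ℕ) * (1 + s) ^ (n - i) := by
    rw [← pow_add, Nat.add_sub_cancel' (Nat.lt_succ_iff.mp i.isLt)]
  rw [show 1 - s / (1 + s) = 1 / (1 + s) by field_simp; ring, div_pow, _root_.one_div_pow, hi]
  field_simp

theorem exists_mem_Ioo_sum_mul_pow_mul_one_sub_pow_ne_zero {n : ℕ} {x : Fin (n + 1) → ℝ}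
    (hx : x ≠ 0) :
    ∃ t ∈ Ioo (0 : ℝ) 1, ∑ i, x i * (t ^ (i : ℕ) * (1 - t) ^ (n - i)) ≠ 0 := by
  have hP : ofFn (n + 1) x ≠ 0 := fun h => hx (injective_ofFn _ (h.trans (ofFn_zero _).symm))
  obtain ⟨s, hs, hroot⟩ := ((Ioi_infinite 0).sdiff (finite_setOfPred_isRoot hP)).nonempty
  have hs0 : 0 < s := hs
  have hs1 : 0 < 1 + s := by linarith
  refine ⟨s / (1 + s), ⟨by positivity, (div_lt_one hs1).mpr (by linarith)⟩, ?_⟩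
  rw [sum_mul_pow_mul_one_sub_pow_div_one_add x hs1.ne']
  exact div_ne_zero hroot (pow_ne_zero _ hs1.ne')

theorem posDef_inv_choose_add {n N : ℕ} (hN : 2 * n ≤ N) :
    (of fun q k : Fin (n + 1) => ((N.choose (q + k) : ℝ))⁻¹).PosDef := by
  have hgram : (of fun q k : Fin (n + 1) => ((N.choose (q + k) : ℝ))⁻¹)
      = of fun q k : Fin (n + 1) => ∫ t in (0 : ℝ)..1, (N + 1) * (1 - t) ^ (N - 2 * n)
          * (t ^ (q : ℕ) * (1 - t) ^ (n - q)) * (t ^ (k : ℕ) * (1 - t) ^ (n - k)) := by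
    ext q k
    have hq := Nat.lt_succ_iff.mp q.isLt
    have hk := Nat.lt_succ_iff.mp k.isLt
    rw [of_apply, of_apply, inv_choose_eq_integral (by omega), ← integral_const_mul]
    congr 1 with t
    rw [show N - (q + k) = (N - 2 * n) + (n - q) + (n - k) by omega, pow_add, pow_add, pow_add]
    ring
  rw [hgram]
  refine posDef_integral_gram zero_lt_one (by fun_prop) (fun i => by fun_prop)
    (fun t ht => ?_) (fun t ht => ?_) fun x => exists_mem_Ioo_sum_mul_pow_mul_one_sub_pow_ne_zero
  · have : 0 ≤ 1 - t := by linarith [ht.2]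
    positivity
  · have : 0 < 1 - t := by linarith [ht.2]
    positivity

theorem stmt17 (n N : ℕ) (hN : 2 * n ≤ N) :
    (Matrix.of fun q k : Fin (n + 1) =>
        (1 : ℚ) / (N.choose ((k : ℕ) + (q : ℕ)) : ℚ)).det ≠ 0 := by
  have hcast : ((Matrix.of fun q k : Fin (n + 1) =>
        (1 : ℚ) / (N.choose ((k : ℕ) + (q : ℕ)) : ℚ)).det : ℝ)
      = (of fun q k : Fin (n + 1) => ((N.choose (q + k) : ℝ))⁻¹).det := by
    rw [← Rat.coe_castHom, RingHom.map_det]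
    congr 1 with q k
    simp [add_comm]
  exact_mod_cast hcast.trans_ne (posDef_inv_choose_add hN).det_pos.ne'
end
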